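/- Under the assumptions of the previous statement, for every feasible x: (1/(4u))·ξ(x)ᵀξ(x) ≤ F(x) - F(x*) ≤ (1/(4v))·ξ(x)ᵀξ(x), where ξ(x) = ∇F(x) - ((𝟙ᵀ∇F(x))/n)·𝟙. -/

import Mathlib

/-!
Along a feasible direction `d` (one with `𝟙ᵀd = 0`) the constant part of `∇F x` is invisible, so
`DF(x) d = ⟪ξ, d⟫`, and the Hessian bounds sandwich `F (x + d)` between
`F x + ⟪ξ, d⟫ + v‖d‖²` and `F x + ⟪ξ, d⟫ + u‖d‖²`. The lower quadratic is at least
`-‖ξ‖²/(4v)` for every `d`, which applied to `d = x* - x` gives the upper bound. The upper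
quadratic attains `-‖ξ‖²/(4u)` at the feasible step `d = -ξ/(2u)`, and `F x* ≤ F (x + d)` by
minimality gives the lower bound.
-/

open RealInnerProductSpace

lemma add_deriv_add_le_of_le_deriv2 {φ φ' φ'' : ℝ → ℝ} {m : ℝ}
    (hφ : ∀ t, HasDerivAt φ (φ' t) t) (hφ' : ∀ t, HasDerivAt φ' (φ'' t) t)
    (hm : ∀ t, m ≤ φ'' t) :
    φ 0 + φ' 0 + m / 2 ≤ φ 1 := by
  have hψ : ∀ t, HasDerivAt (fun t => φ t - m / 2 * t ^ 2) (φ' t - m * t) t := fun t =>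
    ((hφ t).fun_sub ((hasDerivAt_pow 2 t).const_mul (m / 2))).congr_deriv (by push_cast; ring)
  have hψ' : ∀ t, HasDerivAt (fun t => φ' t - m * t) (φ'' t - m) t := fun t =>
    ((hφ' t).fun_sub ((hasDerivAt_id' t).const_mul m)).congr_deriv (by ring)
  have hconvex : ConvexOn ℝ Set.univ (fun t => φ t - m / 2 * t ^ 2) :=
    convexOn_of_hasDerivWithinAt2_nonneg convex_univ
      (fun t _ => (hψ t).continuousAt.continuousWithinAt)
      (fun t _ => (hψ t).hasDerivWithinAt) (fun t _ => (hψ' t).hasDerivWithinAt)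
      (fun t _ => sub_nonneg.mpr (hm t))
  have htangent :=
    hconvex.le_slope_of_hasDerivAt (Set.mem_univ 0) (Set.mem_univ 1) zero_lt_one (hψ 0)
  norm_num [slope_def_field] at htangent
  linarith

lemma le_add_deriv_add_of_deriv2_le {φ φ' φ'' : ℝ → ℝ} {M : ℝ}
    (hφ : ∀ t, HasDerivAt φ (φ' t) t) (hφ' : ∀ t, HasDerivAt φ' (φ'' t) t)
    (hM : ∀ t, φ'' t ≤ M) :
    φ 1 ≤ φ 0 + φ' 0 + M / 2 := by
  have := add_deriv_add_le_of_le_deriv2 (fun t => (hφ t).fun_neg) (fun t => (hφ' t).fun_neg)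
    (fun t => neg_le_neg (hM t))
  linarith

section SecondOrderBounds

variable {E : Type*} [NormedAddCommGroup E] [NormedSpace ℝ E] {F : E → ℝ}

lemma hasDerivAt_add_smul (a d : E) (t : ℝ) : HasDerivAt (fun t : ℝ => a + t • d) d t := by
  simpa only [hasDerivAt_const_add_iff, id_eq, one_smul] using
    ((hasDerivAt_id t).smul_const d).const_add a

lemma hasDerivAt_comp_add_smul (hF : Differentiable ℝ F) (a d : E) (t : ℝ) :
    HasDerivAt (fun t : ℝ => F (a + t • d)) (fderiv ℝ F (a + t • d) d) t :=
  (hF _).hasFDerivAt.comp_hasDerivAt t (hasDerivAt_add_smul a d t)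

lemma hasDerivAt_fderiv_comp_add_smul (hF : ContDiff ℝ 2 F) (a d : E) (t : ℝ) :
    HasDerivAt (fun t : ℝ => fderiv ℝ F (a + t • d) d)
      (iteratedFDeriv ℝ 2 F (a + t • d) ![d, d]) t := by
  have hF' : Differentiable ℝ (fderiv ℝ F) :=
    (hF.fderiv_right (m := 1) le_rfl).differentiable one_ne_zero
  rw [iteratedFDeriv_two_apply]
  exact ((ContinuousLinearMap.apply ℝ ℝ d).hasFDerivAt.comp _ (hF' _).hasFDerivAt).comp_hasDerivAt
    t (hasDerivAt_add_smul a d t)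

lemma ContDiff.add_fderiv_add_le_of_le_iteratedFDeriv_two (hF : ContDiff ℝ 2 F) {c : ℝ}
    (h : ∀ x y, c * ‖y‖ ^ 2 ≤ iteratedFDeriv ℝ 2 F x ![y, y]) (a d : E) :
    F a + fderiv ℝ F a d + c / 2 * ‖d‖ ^ 2 ≤ F (a + d) := by
  have := add_deriv_add_le_of_le_deriv2
    (hasDerivAt_comp_add_smul (hF.differentiable two_ne_zero) a d)
    (hasDerivAt_fderiv_comp_add_smul hF a d) (fun _ => h _ d)
  simpa only [zero_smul, one_smul, add_zero, mul_div_right_comm] using this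

lemma ContDiff.le_add_fderiv_add_of_iteratedFDeriv_two_le (hF : ContDiff ℝ 2 F) {c : ℝ}
    (h : ∀ x y, iteratedFDeriv ℝ 2 F x ![y, y] ≤ c * ‖y‖ ^ 2) (a d : E) :
    F (a + d) ≤ F a + fderiv ℝ F a d + c / 2 * ‖d‖ ^ 2 := by
  have := le_add_deriv_add_of_deriv2_le
    (hasDerivAt_comp_add_smul (hF.differentiable two_ne_zero) a d)
    (hasDerivAt_fderiv_comp_add_smul hF a d) (fun _ => h _ d)
  simpa only [zero_smul, one_smul, add_zero, mul_div_right_comm] using this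

end SecondOrderBounds

lemma sum_sub_mean_eq_zero {n : ℕ} (g : Fin n → ℝ) : ∑ i, (g i - (∑ j, g j) / n) = 0 := by
  rw [Finset.sum_sub_distrib, Finset.sum_const, Finset.card_univ, Fintype.card_fin, nsmul_eq_mul,
    mul_div_cancel_of_imp' (fun hn => by obtain rfl := Nat.cast_eq_zero.mp hn; simp), sub_self]

lemma inner_eq_of_sub_const_of_sum_eq_zero {ι : Type*} [Fintype ι] {g ξ d : EuclideanSpace ℝ ι}
    {c : ℝ} (hξ : ∀ i, ξ i = g i - c) (hd : ∑ i, d i = 0) : ⟪ξ, d⟫ = ⟪g, d⟫ := by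
  simp only [PiLp.inner_apply, RCLike.inner_apply, conj_trivial, hξ, mul_sub,
    Finset.sum_sub_distrib, ← Finset.sum_mul, hd, zero_mul, sub_zero]

section Quadratic

variable {E : Type*} [NormedAddCommGroup E] [InnerProductSpace ℝ E]

lemma inner_add_mul_norm_sq_neg_smul (a : E) {c : ℝ} (hc : c ≠ 0) :
    ⟪a, (-(2 * c)⁻¹) • a⟫ + c * ‖(-(2 * c)⁻¹) • a‖ ^ 2 = -(‖a‖ ^ 2 / (4 * c)) := by
  rw [inner_smul_right, norm_smul, mul_pow, Real.norm_eq_abs, sq_abs, real_inner_self_eq_norm_sq]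
  field_simp
  ring

lemma neg_div_le_inner_add_mul_norm_sq (a d : E) {c : ℝ} (hc : 0 < c) :
    -(‖a‖ ^ 2 / (4 * c)) ≤ ⟪a, d⟫ + c * ‖d‖ ^ 2 := by
  have hsquare : ‖a‖ ^ 2 / (4 * c) + (⟪a, d⟫ + c * ‖d‖ ^ 2) = ‖a + (2 * c) • d‖ ^ 2 / (4 * c) := by
    rw [norm_add_sq_real, inner_smul_right, norm_smul, Real.norm_of_nonneg (by positivity)]
    field_simp
    ring
  linarith [div_nonneg (sq_nonneg ‖a + (2 * c) • d‖) (by positivity : (0 : ℝ) ≤ 4 * c)]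

end Quadratic

theorem stmt8_general (n : ℕ) (v u b : ℝ) (hv : 0 < v) (hvu : v ≤ u)
    (F : EuclideanSpace ℝ (Fin n) → ℝ) (hF : ContDiff ℝ 2 F)
    (hHess : ∀ x y : EuclideanSpace ℝ (Fin n),
      2 * v * ‖y‖ ^ 2 ≤ iteratedFDeriv ℝ 2 F x ![y, y] ∧
      iteratedFDeriv ℝ 2 F x ![y, y] ≤ 2 * u * ‖y‖ ^ 2)
    (xstar : EuclideanSpace ℝ (Fin n)) (hfeas : ∑ i, xstar i = b)
    (hmin : ∀ x : EuclideanSpace ℝ (Fin n), (∑ i, x i = b) → F xstar ≤ F x)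
    (x : EuclideanSpace ℝ (Fin n)) (hx : ∑ i, x i = b)
    (ξ : EuclideanSpace ℝ (Fin n))
    (hξ : ∀ i, ξ i = gradient F x i - (∑ j, gradient F x j) / n) :
    (1 / (4 * u)) * @inner ℝ _ _ ξ ξ ≤ F x - F xstar ∧
    F x - F xstar ≤ (1 / (4 * v)) * @inner ℝ _ _ ξ ξ := by
  have hξsum : ∑ i, ξ i = 0 := by
    simpa only [hξ] using sum_sub_mean_eq_zero (fun i => gradient F x i)
  have hdir : ∀ d : EuclideanSpace ℝ (Fin n), ∑ i, d i = 0 → fderiv ℝ F x d = ⟪ξ, d⟫ :=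
    fun d hd => by rw [← inner_gradient_left, inner_eq_of_sub_const_of_sum_eq_zero hξ hd]
  rw [real_inner_self_eq_norm_sq]
  constructor
  · have hu : 0 < u := hv.trans_le hvu
    have hd : ∑ i, ((-(2 * u)⁻¹) • ξ) i = 0 := by
      simp only [PiLp.smul_apply, smul_eq_mul, ← Finset.mul_sum, hξsum, mul_zero]
    have hstep := hmin (x + (-(2 * u)⁻¹) • ξ) (by
      simp only [PiLp.add_apply, Finset.sum_add_distrib, hx, hd, add_zero])
    have htaylor := hF.le_add_fderiv_add_of_iteratedFDeriv_two_le (fun y z => (hHess y z).2) x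
      ((-(2 * u)⁻¹) • ξ)
    have hdescent := inner_add_mul_norm_sq_neg_smul ξ hu.ne'
    rw [hdir _ hd] at htaylor
    linear_combination hstep + htaylor + hdescent
  · have hd : ∑ i, (xstar - x) i = 0 := by
      simp only [PiLp.sub_apply, Finset.sum_sub_distrib, hfeas, hx, sub_self]
    have htaylor := hF.add_fderiv_add_le_of_le_iteratedFDeriv_two (fun y z => (hHess y z).1) x
      (xstar - x)
    have hquad := neg_div_le_inner_add_mul_norm_sq ξ (xstar - x) hv
    rw [add_sub_cancel, hdir _ hd] at htaylor
    linear_combination htaylor + hquad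

theorem stmt8 (n : ℕ) (v u b : ℝ) (hv : 0 < v) (hvu : v ≤ u)
    (F : EuclideanSpace ℝ (Fin n) → ℝ) (hF : ContDiff ℝ 2 F)
    (hHess : ∀ x y : EuclideanSpace ℝ (Fin n),
      2 * v * ‖y‖ ^ 2 ≤ iteratedFDeriv ℝ 2 F x ![y, y] ∧
      iteratedFDeriv ℝ 2 F x ![y, y] ≤ 2 * u * ‖y‖ ^ 2)
    (xstar : EuclideanSpace ℝ (Fin n)) (hfeas : ∑ i, xstar i = b)
    (hmin : ∀ x : EuclideanSpace ℝ (Fin n), (∑ i, x i = b) → F xstar ≤ F x)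
    (hspan : ∃ c : ℝ, ∀ i, gradient F xstar i = c)
    (x : EuclideanSpace ℝ (Fin n)) (hx : ∑ i, x i = b)
    (ξ : EuclideanSpace ℝ (Fin n))
    (hξ : ∀ i, ξ i = gradient F x i - (∑ j, gradient F x j) / n) :
    (1 / (4 * u)) * @inner ℝ _ _ ξ ξ ≤ F x - F xstar ∧
    F x - F xstar ≤ (1 / (4 * v)) * @inner ℝ _ _ ξ ξ :=
  stmt8_general n v u b hv hvu F hF hHess xstar hfeas hmin x hx ξ hξ
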